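/- arXiv:math/0408434 — 5 statements merged into one kernel-verified Lean document; each statement's English description precedes it below -/
import Mathlib

section
/- With u the self-adjoint unitary permutation matrix with nonzero entries at positions (1,1),(2,4),(3,3),(4,2), the subalgebras D_{12} = u(M_2⊗I_2)u and D_{13} = I_2⊗M_2 of M_4(ℂ) ≅ M_2(ℂ)⊗M_2(ℂ) satisfy: M_4(ℂ) is the linear span of products AB with A ∈ D_{12}, B ∈ D_{13}. -/
open Matrix

noncomputable section

/-- Identification `M₂(ℂ) ⊗ M₂(ℂ) ≅ M₄(ℂ)`: the Kronecker (block) tensor product,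
with index `(i₁,i₂) ↦ 2·i₁+i₂`. -/
def tens (a b : Matrix (Fin 2) (Fin 2) ℂ) : Matrix (Fin 4) (Fin 4) ℂ :=
  Matrix.reindex finProdFinEquiv finProdFinEquiv (Matrix.kroneckerMap (· * ·) a b)

/-- The permutation matrix with 1's at positions (1,1),(2,4),(3,3),(4,2). -/
def uMat : Matrix (Fin 4) (Fin 4) ℂ := !![1,0,0,0; 0,0,0,1; 0,0,1,0; 0,1,0,0]

/-- The permutation matrix with 1's at positions (1,1),(2,2),(3,4),(4,3). -/
def vMat : Matrix (Fin 4) (Fin 4) ℂ := !![1,0,0,0; 0,1,0,0; 0,0,0,1; 0,0,1,0]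

/-- `e_u(i,j) = u (e(i,j) ⊗ I₂) u`. -/
def eU (i j : Fin 2) : Matrix (Fin 4) (Fin 4) ℂ :=
  uMat * tens (Matrix.single i j 1) 1 * uMat

/-- `e_v(i,j) = v (e(i,j) ⊗ I₂) v`. -/
def eV (i j : Fin 2) : Matrix (Fin 4) (Fin 4) ℂ :=
  vMat * tens (Matrix.single i j 1) 1 * vMat

/-- `e_0(i,j) = I₂ ⊗ e(i,j)`. -/
def e0 (i j : Fin 2) : Matrix (Fin 4) (Fin 4) ℂ :=
  tens 1 (Matrix.single i j 1)

end

/-!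
In the tensor coordinates `(i, k)` of `ℂ² ⊗ ℂ²`, `u` is the controlled-NOT permutation
`(i, k) ↦ (i + k, k)` (addition in `Fin 2`). Hence `u (a ⊗ 1) u = ∑ₖ aₖ ⊗ eₖₖ`, where `aₖ` is `a`
with both indices shifted by `k`, and multiplying by `1 ⊗ eₖₗ` keeps only the `k`-th block:
`u (a ⊗ 1) u (1 ⊗ eₖₗ) = aₖ ⊗ eₖₗ`. Taking `a = e_{i+k, j+k}` gives `aₖ = eᵢⱼ`, so every matrix unit
`eᵢⱼ ⊗ eₖₗ` of `M₄(ℂ)` is such a product.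
-/

open Matrix

lemma submatrix_add_right_single {G α : Type*} [AddGroup G] [DecidableEq G] [Zero α]
    (i j k : G) (r : α) :
    (single (i + k) (j + k) r).submatrix (· + k) (· + k) = single i j r := by
  simpa using submatrix_single_equiv (Equiv.addRight k) (Equiv.addRight k) (i + k) (j + k) r

lemma tens_mul_tens (a b c d : Matrix (Fin 2) (Fin 2) ℂ) :
    tens a b * tens c d = tens (a * c) (b * d) := by
  simp only [tens, reindex_apply, submatrix_mul_equiv, mul_kronecker_mul]

lemma tens_single_single (i j k l : Fin 2) :
    tens (single i j 1) (single k l 1) =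
      single (finProdFinEquiv (i, k)) (finProdFinEquiv (j, l)) 1 := by
  simp [tens, single_kronecker_single]

lemma uMat_mul_tens_mul_uMat (a : Matrix (Fin 2) (Fin 2) ℂ) :
    uMat * tens a 1 * uMat = ∑ k, tens (a.submatrix (· + k) (· + k)) (single k k 1) := by
  have h0 : (finProdFinEquiv.symm 0 : Fin 2 × Fin 2) = (0, 0) := rfl
  have h1 : (finProdFinEquiv.symm 1 : Fin 2 × Fin 2) = (0, 1) := rfl
  have h2 : (finProdFinEquiv.symm 2 : Fin 2 × Fin 2) = (1, 0) := rfl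
  have h3 : (finProdFinEquiv.symm 3 : Fin 2 × Fin 2) = (1, 1) := rfl
  ext r c
  fin_cases r <;> fin_cases c <;>
    simp [uMat, tens, mul_apply, Fin.sum_univ_four, vecMul, dotProduct, one_apply, h0, h1, h2, h3]

lemma uMat_mul_tens_mul_uMat_mul_tens_single (a : Matrix (Fin 2) (Fin 2) ℂ) (k l : Fin 2) :
    uMat * tens a 1 * uMat * tens 1 (single k l 1) =
      tens (a.submatrix (· + k) (· + k)) (single k l 1) := by
  rw [uMat_mul_tens_mul_uMat, Finset.sum_mul, Finset.sum_eq_single k]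
  · simp [tens_mul_tens]
  · intro k' _ hk'
    rw [tens_mul_tens, single_mul_single_of_ne (h := hk')]
    simp [tens]
  · simp

/-- `M₄(ℂ)` is the linear span of the products `AB` with
`A ∈ D₁₂ = u(M₂⊗I₂)u` and `B ∈ D₁₃ = I₂⊗M₂`. -/
theorem stmt2 :
    Submodule.span ℂ
      {m : Matrix (Fin 4) (Fin 4) ℂ |
        ∃ a b : Matrix (Fin 2) (Fin 2) ℂ,
          m = (uMat * tens a 1 * uMat) * tens 1 b} = ⊤ := by
  rw [eq_top_iff, ← (stdBasis ℂ (Fin 4) (Fin 4)).span_eq, Submodule.span_le]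
  rintro _ ⟨⟨p, q⟩, rfl⟩
  obtain ⟨⟨i, k⟩, rfl⟩ := (finProdFinEquiv (m := 2) (n := 2)).surjective p
  obtain ⟨⟨j, l⟩, rfl⟩ := (finProdFinEquiv (m := 2) (n := 2)).surjective q
  refine Submodule.subset_span ⟨single (i + k) (j + k) 1, single k l 1, ?_⟩
  rw [stdBasis_eq_single, uMat_mul_tens_mul_uMat_mul_tens_single, submatrix_add_right_single,
    tens_single_single]
end

section
/- With u and v the self-adjoint unitary permutation matrices with nonzero entries at positions (1,1),(2,4),(3,3),(4,2) and (1,1),(2,2),(3,4),(4,3) respectively, the subalgebras D_{12} = u(M_2⊗I_2)u and D_{23} = v(M_2⊗I_2)v of M_4(ℂ) satisfy D_{12} ∩ D_{23} = ℂ·I_4. -/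
open Matrix

/-!
Conjugation by the permutation matrices `u` and `v` only permutes entries, so `u (a ⊗ 1) u` and
`v (b ⊗ 1) v` can be written out. The first carries `a₀₁` and `a₁₀` at (0-indexed) positions
`(0,2)` and `(2,0)`, where the second vanishes, and its diagonal
`(a₀₀, a₁₁, a₁₁, a₀₀)` must equal `(b₀₀, b₀₀, b₁₁, b₁₁)`; hence `a` is scalar. Conversely
scalars lie in both algebras because `u² = v² = 1`.
-/

lemma tens_eq (a b : Matrix (Fin 2) (Fin 2) ℂ) : tens a b =
    !![a 0 0 * b 0 0, a 0 0 * b 0 1, a 0 1 * b 0 0, a 0 1 * b 0 1;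
       a 0 0 * b 1 0, a 0 0 * b 1 1, a 0 1 * b 1 0, a 0 1 * b 1 1;
       a 1 0 * b 0 0, a 1 0 * b 0 1, a 1 1 * b 0 0, a 1 1 * b 0 1;
       a 1 0 * b 1 0, a 1 0 * b 1 1, a 1 1 * b 1 0, a 1 1 * b 1 1] := by
  ext i j
  fin_cases i <;> fin_cases j <;> simp [tens, finProdFinEquiv, Fin.divNat, Fin.modNat]

lemma tens_smul_one_one (c : ℂ) : tens (c • 1) 1 = c • 1 := by
  simp [tens, smul_kronecker, submatrix_smul, submatrix_one_equiv]

lemma uMat_mul_self : uMat * uMat = 1 := by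
  ext i j
  fin_cases i <;> fin_cases j <;> simp [uMat, mul_apply, Fin.sum_univ_four, one_apply]

lemma vMat_mul_self : vMat * vMat = 1 := by
  ext i j
  fin_cases i <;> fin_cases j <;> simp [vMat, mul_apply, Fin.sum_univ_four, one_apply]

lemma mul_tens_smul_one_one_mul_eq_smul_one {P : Matrix (Fin 4) (Fin 4) ℂ} (hP : P * P = 1)
    (c : ℂ) : P * tens (c • 1) 1 * P = c • 1 := by
  rw [tens_smul_one_one, mul_smul_comm, mul_one, smul_mul_assoc, hP]

lemma uMat_mul_tens_one_mul_uMat (a : Matrix (Fin 2) (Fin 2) ℂ) : uMat * tens a 1 * uMat =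
    !![a 0 0, 0, a 0 1, 0; 0, a 1 1, 0, a 1 0; a 1 0, 0, a 1 1, 0; 0, a 0 1, 0, a 0 0] := by
  rw [tens_eq]
  ext i j
  fin_cases i <;> fin_cases j <;> simp [uMat, mul_apply, Fin.sum_univ_four]

lemma vMat_mul_tens_one_mul_vMat (b : Matrix (Fin 2) (Fin 2) ℂ) : vMat * tens b 1 * vMat =
    !![b 0 0, 0, 0, b 0 1; 0, b 0 0, b 0 1, 0; 0, b 1 0, b 1 1, 0; b 1 0, 0, 0, b 1 1] := by
  rw [tens_eq]
  ext i j
  fin_cases i <;> fin_cases j <;> simp [vMat, mul_apply, Fin.sum_univ_four]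

lemma exists_eq_smul_one_of_uMat_conj_eq_vMat_conj {a b : Matrix (Fin 2) (Fin 2) ℂ}
    (h : uMat * tens a 1 * uMat = vMat * tens b 1 * vMat) : ∃ c : ℂ, a = c • 1 := by
  rw [uMat_mul_tens_one_mul_uMat, vMat_mul_tens_one_mul_vMat] at h
  have entry (i j : Fin 4) := congrFun (congrFun h i) j
  have h01 : a 0 1 = 0 := by simpa using entry 0 2
  have h10 : a 1 0 = 0 := by simpa using entry 2 0
  have h00 : a 0 0 = b 0 0 := by simpa using entry 0 0
  have h11 : a 1 1 = b 0 0 := by simpa using entry 1 1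
  refine ⟨a 0 0, ?_⟩
  ext i j
  fin_cases i <;> fin_cases j <;> simp [h01, h10, h00, h11]

/-- `D₁₂ ∩ D₂₃ = ℂ·I₄` where `D₁₂ = u(M₂⊗I₂)u` and `D₂₃ = v(M₂⊗I₂)v`. -/
theorem stmt3 :
    {x : Matrix (Fin 4) (Fin 4) ℂ | ∃ a : Matrix (Fin 2) (Fin 2) ℂ, x = uMat * tens a 1 * uMat} ∩
      {x : Matrix (Fin 4) (Fin 4) ℂ | ∃ b : Matrix (Fin 2) (Fin 2) ℂ, x = vMat * tens b 1 * vMat}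
    = {x : Matrix (Fin 4) (Fin 4) ℂ | ∃ c : ℂ, x = c • (1 : Matrix (Fin 4) (Fin 4) ℂ)} := by
  ext x
  constructor
  · rintro ⟨⟨a, rfl⟩, b, hb⟩
    obtain ⟨c, rfl⟩ := exists_eq_smul_one_of_uMat_conj_eq_vMat_conj hb
    exact ⟨c, mul_tens_smul_one_one_mul_eq_smul_one uMat_mul_self c⟩
  · rintro ⟨c, rfl⟩
    exact ⟨⟨c • 1, (mul_tens_smul_one_one_mul_eq_smul_one uMat_mul_self c).symm⟩,
      ⟨c • 1, (mul_tens_smul_one_one_mul_eq_smul_one vMat_mul_self c).symm⟩⟩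
end

section
/- With u and v as above, M_4(ℂ) equals the linear span of the products AB with A ∈ D_{12} = u(M_2⊗I_2)u and B ∈ D_{23} = v(M_2⊗I_2)v. -/
open Matrix

/-! Up to the permutations `u` and `v`, both `D₁₂` and `D₂₃` are copies of `M₂ ⊗ I₂`, taken with
respect to two different identifications `Fin 4 ≃ Fin 2 × Fin 2`. A matrix unit of the first copy
times a matrix unit of the second is a single matrix unit of `M₄` as soon as each "first-factor
block" of the first decomposition meets each of the second in at most one index; and every matrix
unit `E_pq` arises this way once every pair of "second-factor" coordinates is attained by some
index `r`: take the one carrying those of `p` and `q`, and factor `E_pq` through it. -/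

open Equiv Function
open scoped Kronecker

section BlockEmbedding

variable {R ι ι' κ κ' n : Type*} [CommSemiring R] [Fintype κ]
  [DecidableEq ι] [DecidableEq ι'] [DecidableEq κ] [DecidableEq κ'] [DecidableEq n]

theorem reindex_single_kronecker_one (e : ι × κ ≃ n) (i j : ι) (c : R) :
    reindex e e (single i j c ⊗ₖ (1 : Matrix κ κ R)) = ∑ m, single (e (i, m)) (e (j, m)) c := by
  ext p q
  obtain ⟨⟨i', m⟩, rfl⟩ := e.surjective p
  obtain ⟨⟨j', m'⟩, rfl⟩ := e.surjective q
  by_cases hm : m = m' <;>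
    simp [hm, Matrix.sum_apply, single_apply, one_apply, ← and_assoc, ite_and]

variable [Fintype κ'] [Fintype n]

theorem reindex_single_kronecker_one_mul_eq_single (e : ι × κ ≃ n) (e' : ι' × κ' ≃ n)
    (hinj : Injective fun r => ((e.symm r).1, (e'.symm r).1))
    {i j : ι} {k l : ι'} {m : κ} {m' : κ'} (h : e (j, m) = e' (k, m')) :
    reindex e e (single i j 1 ⊗ₖ (1 : Matrix κ κ R)) * reindex e' e' (single k l 1 ⊗ₖ 1) =
      single (e (i, m)) (e' (l, m')) 1 := by
  have meet : ∀ x y, e (j, x) = e' (k, y) → x = m ∧ y = m' := by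
    intro x y hxy
    have : e (j, x) = e (j, m) := hinj (Prod.ext (by simp) (by simp [hxy, h]))
    obtain rfl : x = m := by simpa using this
    exact ⟨rfl, (by simpa [h] using hxy : m' = y).symm⟩
  rw [reindex_single_kronecker_one, reindex_single_kronecker_one, Finset.sum_mul_sum,
    ← Finset.sum_product', Finset.univ_product_univ, Fintype.sum_eq_single (m, m'), h,
    single_mul_single_same, one_mul]
  rintro ⟨x, y⟩ hxy
  exact single_mul_single_of_ne _ _ _ _ (fun hne => hxy (Prod.ext_iff.2 (meet x y hne))) _

theorem span_reindex_kronecker_one_mul_eq_top (e : ι × κ ≃ n) (e' : ι' × κ' ≃ n)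
    (hinj : Injective fun r => ((e.symm r).1, (e'.symm r).1))
    (hsurj : Surjective fun r => ((e.symm r).2, (e'.symm r).2)) :
    Submodule.span R {x | ∃ a b, x = reindex e e (a ⊗ₖ (1 : Matrix κ κ R)) *
      reindex e' e' (b ⊗ₖ (1 : Matrix κ' κ' R))} = ⊤ := by
  refine eq_top_iff.2 ((stdBasis R n n).span_eq.symm.le.trans (Submodule.span_mono ?_))
  rintro _ ⟨⟨p, q⟩, rfl⟩
  obtain ⟨r, hr⟩ := hsurj ((e.symm p).2, (e'.symm q).2)
  simp only [Prod.ext_iff] at hr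
  refine ⟨single (e.symm p).1 (e.symm r).1 1, single (e'.symm r).1 (e'.symm q).1 1, ?_⟩
  rw [reindex_single_kronecker_one_mul_eq_single e e' hinj (m := (e.symm p).2)
    (m' := (e'.symm q).2)]
  · simp [stdBasis_eq_single]
  · simp [← hr.1, ← hr.2]

end BlockEmbedding

theorem permMatrix_mul_reindex_mul_permMatrix_inv {R m n : Type*} [Semiring R] [Fintype n]
    [DecidableEq n] (σ : Perm n) (e : m ≃ n) (M : Matrix m m R) :
    σ.permMatrix R * reindex e e M * σ⁻¹.permMatrix R = reindex (e.trans σ⁻¹) (e.trans σ⁻¹) M := by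
  rw [PEquiv.toMatrix_toPEquiv_mul, PEquiv.mul_toMatrix_toPEquiv]
  rfl

theorem swap_permMatrix_mul_reindex_mul_swap_permMatrix {R m n : Type*} [Semiring R] [Fintype n]
    [DecidableEq n] (x y : n) (e : m ≃ n) (M : Matrix m m R) :
    (swap x y).permMatrix R * reindex e e M * (swap x y).permMatrix R =
      reindex (e.trans (swap x y)) (e.trans (swap x y)) M := by
  simpa only [swap_inv] using permMatrix_mul_reindex_mul_permMatrix_inv (swap x y) e M

theorem uMat_eq_permMatrix : uMat = (swap 1 3 : Perm (Fin 4)).permMatrix ℂ := by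
  ext i j
  fin_cases i <;> fin_cases j <;> simp [uMat, PEquiv.toMatrix_apply, swap_apply_of_ne_of_ne]

theorem vMat_eq_permMatrix : vMat = (swap 2 3 : Perm (Fin 4)).permMatrix ℂ := by
  ext i j
  fin_cases i <;> fin_cases j <;> simp [vMat, PEquiv.toMatrix_apply, swap_apply_of_ne_of_ne]

abbrev uEquiv : Fin 2 × Fin 2 ≃ Fin 4 := finProdFinEquiv.trans (swap 1 3)

abbrev vEquiv : Fin 2 × Fin 2 ≃ Fin 4 := finProdFinEquiv.trans (swap 2 3)

theorem uMat_mul_tens_mul_uMat_s4 (a : Matrix (Fin 2) (Fin 2) ℂ) :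
    uMat * tens a 1 * uMat = reindex uEquiv uEquiv (a ⊗ₖ 1) := by
  rw [uMat_eq_permMatrix, tens, swap_permMatrix_mul_reindex_mul_swap_permMatrix]

theorem vMat_mul_tens_mul_vMat (b : Matrix (Fin 2) (Fin 2) ℂ) :
    vMat * tens b 1 * vMat = reindex vEquiv vEquiv (b ⊗ₖ 1) := by
  rw [vMat_eq_permMatrix, tens, swap_permMatrix_mul_reindex_mul_swap_permMatrix]

/-- `M₄(ℂ)` is the linear span of the products `AB` with
`A ∈ D₁₂ = u(M₂⊗I₂)u` and `B ∈ D₂₃ = v(M₂⊗I₂)v`. -/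
theorem stmt4 :
    Submodule.span ℂ
      {m : Matrix (Fin 4) (Fin 4) ℂ |
        ∃ a b : Matrix (Fin 2) (Fin 2) ℂ,
          m = (uMat * tens a 1 * uMat) * (vMat * tens b 1 * vMat)} = ⊤ := by
  simp_rw [uMat_mul_tens_mul_uMat_s4, vMat_mul_tens_mul_vMat]
  exact span_reindex_kronecker_one_mul_eq_top uEquiv vEquiv (by decide) (by decide)
end

section
/- Let E_0 : M_2⊗M_2 → I_2⊗M_2 be defined by E_0(a⊗b) = τ_2(a)(I_2⊗b), where τ_2 is the normalized trace on M_2(ℂ), and let E_u(x) = u·E_0'(uxu)·u where E_0'(a⊗b)=τ_2(b)(a⊗I_2). Then E_u(I_2⊗b) = τ_2(b)·I_4 for all b ∈ M_2(ℂ); that is, the square formed by u(M_2⊗I_2)u ⊂ M_2⊗M_2 above ℂ ⊂ I_2⊗M_2 is a commuting square. -/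
open Matrix

noncomputable section

/-- The trace-preserving conditional expectation of `M₄(ℂ) = M₂⊗M₂` onto `M₂⊗I₂`,
given on elementary tensors by `E₀'(a⊗b) = τ₂(b)·(a⊗I₂)` (partial normalized trace
over the second factor). -/
def E0' (x : Matrix (Fin 4) (Fin 4) ℂ) : Matrix (Fin 4) (Fin 4) ℂ :=
  tens (Matrix.of fun i j : Fin 2 =>
    (x ((finProdFinEquiv ((i, 0) : Fin 2 × Fin 2) : Fin 4)) ((finProdFinEquiv ((j, 0) : Fin 2 × Fin 2) : Fin 4)) +
      x ((finProdFinEquiv ((i, 1) : Fin 2 × Fin 2) : Fin 4)) ((finProdFinEquiv ((j, 1) : Fin 2 × Fin 2) : Fin 4))) / 2) 1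

/-- The conditional expectation of `M₄(ℂ)` onto `u(M₂⊗I₂)u`:
`E_u(x) = u·E₀'(uxu)·u`. -/
def Eu (x : Matrix (Fin 4) (Fin 4) ℂ) : Matrix (Fin 4) (Fin 4) ℂ :=
  uMat * E0' (uMat * x * uMat) * uMat

end

/-!
In the coordinates `Fin 4 ≃ Fin 2 × Fin 2`, `u` is the CNOT permutation
`(i₁, i₂) ↦ (i₁ + i₂, i₂)`, so `u (I₂ ⊗ b) u` has entries `δ(i₁ + i₂, j₁ + j₂) · b i₂ j₂`.
Its partial trace over the second factor only sees `i₂ = j₂`, where the Kronecker delta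
reduces to `δ(i₁, j₁)`; hence `E₀'(u (I₂ ⊗ b) u) = τ₂(b) · I₄`, and conjugating back by
the involution `u` leaves the scalar unchanged.
-/

theorem Matrix.swap_mul_mul_swap {R n : Type*} [Semiring R] [Fintype n] [DecidableEq n]
    (i j : n) (x : Matrix n n R) :
    swap R i j * x * swap R i j = x.submatrix (Equiv.swap i j) (Equiv.swap i j) := by
  simp [swap, PEquiv.toMatrix_toPEquiv_mul, PEquiv.mul_toMatrix_toPEquiv]

def cnot : Equiv.Perm (Fin 2 × Fin 2) :=
  Function.Involutive.toPerm (fun p => (p.1 + p.2, p.2)) (by unfold Function.Involutive; decide)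

lemma cnot_apply (p : Fin 2 × Fin 2) : cnot p = (p.1 + p.2, p.2) := rfl

lemma finProdFinEquiv_cnot (p : Fin 2 × Fin 2) :
    (finProdFinEquiv (cnot p) : Fin 4) = Equiv.swap (1 : Fin 4) 3 (finProdFinEquiv p) := by
  revert p
  decide

lemma uMat_eq_swap : uMat = swap ℂ 1 3 := by
  ext i j
  fin_cases i <;> fin_cases j <;> simp [uMat, swap, Equiv.swap_apply_def]

lemma tens_apply (a b : Matrix (Fin 2) (Fin 2) ℂ) (i j : Fin 2 × Fin 2) :
    tens a b (finProdFinEquiv i) (finProdFinEquiv j) = a i.1 j.1 * b i.2 j.2 := by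
  simp [tens]

lemma tens_one_one : tens 1 1 = 1 := by
  simp [tens, submatrix_one_equiv]

lemma tens_smul_left (c : ℂ) (a b : Matrix (Fin 2) (Fin 2) ℂ) :
    tens (c • a) b = c • tens a b := by
  ext i j
  simp [tens, mul_assoc]

lemma E0'_uMat_mul_tens_one_mul_uMat (b : Matrix (Fin 2) (Fin 2) ℂ) :
    E0' (uMat * tens 1 b * uMat) = (trace b / 2) • 1 := by
  rw [E0', ← tens_one_one, ← tens_smul_left]
  congr 1
  ext i j
  simp only [of_apply, uMat_eq_swap, swap_mul_mul_swap, submatrix_apply, ← finProdFinEquiv_cnot,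
    tens_apply, cnot_apply, add_zero, add_left_inj, Matrix.smul_apply, one_apply, trace_fin_two,
    smul_eq_mul]
  split_ifs <;> ring

/-- `E_u(I₂⊗b) = τ₂(b)·I₄` for every `b ∈ M₂(ℂ)`: the square formed by
`u(M₂⊗I₂)u ⊂ M₂⊗M₂` above `ℂ ⊂ I₂⊗M₂` is a commuting square. -/
theorem stmt5 :
    ∀ b : Matrix (Fin 2) (Fin 2) ℂ,
      Eu (tens 1 b) = (Matrix.trace b / 2) • (1 : Matrix (Fin 4) (Fin 4) ℂ) := by
  intro b
  rw [Eu, E0'_uMat_mul_tens_one_mul_uMat, Matrix.mul_smul, mul_one, Matrix.smul_mul, uMat_eq_swap,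
    swap_mul_self]
end

section
/- Let G₁, G₂, G₃ be groups with subgroups H_{ij} ⊂ G_i as in a fillable triangle, and suppose G₃ is the free product of H_{13} and H_{23} amalgamated over H_{123} (with the given inclusion maps). Then the generalized free product of the triangle is realizable and equals G₁ ∗_{H_{12}} G₂; in particular the canonical maps G_i → G₁ ∗_{H_{12}} G₂ (for i = 1,2,3, the third induced by the amalgamated free product structure of G₃) are injective and the required diagrams commute. -/
universe u

/-- A two-element family of groups indexed by `Bool`. -/
abbrev GPair (G₁ G₂ : Type u) : Bool → Type u
  | true => G₁
  | false => G₂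

instance gPairGroup {G₁ G₂ : Type u} [Group G₁] [Group G₂] : ∀ b, Group (GPair G₁ G₂ b)
  | true => inferInstanceAs (Group G₁)
  | false => inferInstanceAs (Group G₂)

/-- The pair of embeddings of the amalgamated subgroup `H` into `G₁` and `G₂`. -/
def gPairHom {H G₁ G₂ : Type u} [Group H] [Group G₁] [Group G₂]
    (f₁ : H →* G₁) (f₂ : H →* G₂) : ∀ b, H →* GPair G₁ G₂ b
  | true => f₁
  | false => f₂

/-- The amalgamated free product (pushout) `G₁ ∗_H G₂` of `G₁` and `G₂`
along `f₁ : H →* G₁`, `f₂ : H →* G₂`. -/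
def Amalgam {H G₁ G₂ : Type u} [Group H] [Group G₁] [Group G₂]
    (f₁ : H →* G₁) (f₂ : H →* G₂) : Type u :=
  Monoid.PushoutI (gPairHom f₁ f₂)

noncomputable instance {H G₁ G₂ : Type u} [Group H] [Group G₁] [Group G₂]
    (f₁ : H →* G₁) (f₂ : H →* G₂) : Group (Amalgam f₁ f₂) :=
  inferInstanceAs (Group (Monoid.PushoutI (gPairHom f₁ f₂)))

/-- The canonical map `G₁ →* G₁ ∗_H G₂`. -/
def Amalgam.inl {H G₁ G₂ : Type u} [Group H] [Group G₁] [Group G₂]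
    (f₁ : H →* G₁) (f₂ : H →* G₂) : G₁ →* Amalgam f₁ f₂ :=
  Monoid.PushoutI.of (φ := gPairHom f₁ f₂) true

/-- The canonical map `G₂ →* G₁ ∗_H G₂`. -/
def Amalgam.inr {H G₁ G₂ : Type u} [Group H] [Group G₁] [Group G₂]
    (f₁ : H →* G₁) (f₂ : H →* G₂) : G₂ →* Amalgam f₁ f₂ :=
  Monoid.PushoutI.of (φ := gPairHom f₁ f₂) false

/-!
Send `H₁₃ ∗_{H₁₂₃} H₂₃` to `G₁ ∗_{H₁₂} G₂` letter by letter through `g₁` and `g₂`. Fillability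
says precisely that a letter outside the edge group `H₁₂₃` lands outside `H₁₂`, so a reduced word
goes to a reduced word of the same length. By the normal form theorem a nonempty reduced word never
represents an element of the base group, so only the trivial element can lie in the kernel.
-/

open Function

theorem Subgroup.IsComplement.eq_one_of_mem_of_mem {G : Type*} [Group G] {S T : Set G}
    (hST : Subgroup.IsComplement S T) (hS : (1 : G) ∈ S) (hT : (1 : G) ∈ T) {g : G} (hgS : g ∈ S)
    (hgT : g ∈ T) : g = 1 :=
  congrArg (fun p : S × T => (p.1 : G))
    (hST.1 (a₁ := (⟨g, hgS⟩, ⟨1, hT⟩)) (a₂ := (⟨1, hS⟩, ⟨g, hgT⟩)) (by simp))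

namespace Monoid

namespace CoprodI.Word

variable {ι : Type*} {M N : ι → Type*} [∀ i, Monoid (M i)] [∀ i, Monoid (N i)]

def map (ψ : ∀ i, M i →* N i) (hψ : ∀ i, Injective (ψ i)) (w : Word M) : Word N where
  toList := w.toList.map (Sigma.map id fun i => ψ i)
  ne_one := by
    simp only [List.mem_map]
    rintro _ ⟨⟨i, g⟩, hg, rfl⟩
    exact (map_ne_one_iff (ψ i) (hψ i)).2 (w.ne_one _ hg)
  chain_ne := (List.isChain_map _).2 w.chain_ne

theorem map_eq_empty_iff {ψ : ∀ i, M i →* N i} {hψ : ∀ i, Injective (ψ i)} {w : Word M} :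
    w.map ψ hψ = empty ↔ w = empty := by
  simp [Word.ext_iff, map]

end CoprodI.Word

namespace PushoutI

variable {ι H K : Type*} {G G' : ι → Type*} [∀ i, Group (G i)] [∀ i, Group (G' i)]
  [Group H] [Group K] {φ : ∀ i, H →* G i} {φ' : ∀ i, K →* G' i}

theorem NormalWord.reduced {d : NormalWord.Transversal φ} (w : NormalWord d) :
    Reduced φ w.toWord := by
  rintro ⟨i, g⟩ hg hgφ
  exact w.ne_one _ hg ((d.compl i).eq_one_of_mem_of_mem (one_mem _) (d.one_mem i) hgφ
    (w.normalized i g hg))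

theorem exists_eq_base_mul_ofCoprodI_prod (hφ : ∀ i, Injective (φ i)) (x : PushoutI φ) :
    ∃ (h : H) (w : CoprodI.Word G), Reduced φ w ∧ x = base φ h * ofCoprodI w.prod := by
  classical
  obtain ⟨d⟩ := NormalWord.transversal_nonempty φ hφ
  let w := NormalWord.equiv (d := d) x
  exact ⟨w.head, w.toWord, w.reduced, (NormalWord.equiv.symm_apply_apply x).symm⟩

def map (ψ : ∀ i, G i →* G' i) (θ : H →* K) (hcomm : ∀ i, (ψ i).comp (φ i) = (φ' i).comp θ) :
    PushoutI φ →* PushoutI φ' :=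
  lift (fun i => (of i).comp (ψ i)) ((base φ').comp θ) fun i => by
    rw [MonoidHom.comp_assoc, hcomm, ← MonoidHom.comp_assoc, of_comp_eq_base]

variable {ψ : ∀ i, G i →* G' i} {θ : H →* K} {hcomm : ∀ i, (ψ i).comp (φ i) = (φ' i).comp θ}

@[simp]
theorem map_of (i : ι) (g : G i) : map ψ θ hcomm (of i g) = of i (ψ i g) :=
  lift_of _ _ _ g

@[simp]
theorem map_base (h : H) : map ψ θ hcomm (base φ h) = base φ' (θ h) :=
  lift_base _ _ _ h

theorem map_comp_of (i : ι) :
    (map ψ θ hcomm).comp (of (φ := φ) i) = (of (φ := φ') i).comp (ψ i) :=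
  MonoidHom.ext fun g => by simp

theorem map_ofCoprodI_prod (hψ : ∀ i, Injective (ψ i)) (w : CoprodI.Word G) :
    map ψ θ hcomm (ofCoprodI w.prod) = ofCoprodI (w.map ψ hψ).prod := by
  simp only [CoprodI.Word.prod, CoprodI.Word.map, map_list_prod, List.map_map]
  rfl

theorem Reduced.map (hψ : ∀ i, Injective (ψ i))
    (hfill : ∀ i, (φ' i).range.comap (ψ i) ≤ (φ i).range) {w : CoprodI.Word G}
    (hw : Reduced φ w) : Reduced φ' (w.map ψ hψ) := by
  simp only [Reduced, CoprodI.Word.map, List.mem_map]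
  rintro _ ⟨⟨i, g⟩, hg, rfl⟩ hψg
  exact hw _ hg (hfill i hψg)

theorem map_injective (hφ : ∀ i, Injective (φ i)) (hφ' : ∀ i, Injective (φ' i))
    (hψ : ∀ i, Injective (ψ i)) (hθ : Injective θ)
    (hfill : ∀ i, (φ' i).range.comap (ψ i) ≤ (φ i).range) :
    Injective (map ψ θ hcomm) := by
  refine (injective_iff_map_eq_one _).2 fun x hx => ?_
  obtain ⟨h, w, hw, rfl⟩ := exists_eq_base_mul_ofCoprodI_prod hφ x
  rw [map_mul, map_base, map_ofCoprodI_prod hψ] at hx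
  have hw' : w.map ψ hψ = .empty := (hw.map hψ hfill).eq_empty_of_mem_range hφ'
    ⟨(θ h)⁻¹, by rw [map_inv, eq_inv_of_mul_eq_one_right hx]⟩
  rw [hw', CoprodI.Word.prod_empty, map_one, mul_one] at hx
  have h1 : h = 1 := (injective_iff_map_eq_one θ).1 hθ h
    ((injective_iff_map_eq_one _).1 (base_injective hφ') _ hx)
  rw [CoprodI.Word.map_eq_empty_iff.1 hw', h1, map_one, CoprodI.Word.prod_empty, map_one, one_mul]

end PushoutI

end Monoid

theorem gPairHom_injective {H G₁ G₂ : Type u} [Group H] [Group G₁] [Group G₂]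
    {f₁ : H →* G₁} {f₂ : H →* G₂} (hf₁ : Injective f₁) (hf₂ : Injective f₂) :
    ∀ b, Injective (gPairHom f₁ f₂ b)
  | true => hf₁
  | false => hf₂

def gPairMap {A₁ A₂ B₁ B₂ : Type u} [Group A₁] [Group A₂] [Group B₁] [Group B₂]
    (g₁ : A₁ →* B₁) (g₂ : A₂ →* B₂) : ∀ b, GPair A₁ A₂ b →* GPair B₁ B₂ b
  | true => g₁
  | false => g₂

theorem gPairMap_injective {A₁ A₂ B₁ B₂ : Type u} [Group A₁] [Group A₂] [Group B₁] [Group B₂]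
    {g₁ : A₁ →* B₁} {g₂ : A₂ →* B₂} (hg₁ : Injective g₁) (hg₂ : Injective g₂) :
    ∀ b, Injective (gPairMap g₁ g₂ b)
  | true => hg₁
  | false => hg₂

theorem MonoidHom.comap_range_le_of_inf_range_eq {A B C D : Type*} [Group A] [Group B] [Group C]
    [Group D] {f : C →* B} {g : A →* B} {j : D →* A} (hg : Injective g)
    (hfill : f.range ⊓ g.range = (g.comp j).range) : f.range.comap g ≤ j.range := by
  intro a ha
  obtain ⟨d, hd⟩ : g a ∈ (g.comp j).range := hfill ▸ ⟨ha, a, rfl⟩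
  exact ⟨d, hg hd⟩

/-- Hanna Neumann's criterion: in a fillable triangle of groups
`(G₁,G₂,G₃;H₁₂,H₁₃,H₂₃;H₁₂₃)` in which the vertex group `G₃` is itself the
amalgamated free product `H₁₃ ∗_{H₁₂₃} H₂₃`, the generalized free product is
realizable and equals `G₁ ∗_{H₁₂} G₂`: the canonical maps of `G₁`, `G₂` and
`G₃ = H₁₃ ∗_{H₁₂₃} H₂₃` into `G₁ ∗_{H₁₂} G₂` are injective and the triangle
diagrams commute. -/
theorem stmt8 {G₁ G₂ H₁₂ H₁₃ H₂₃ H₁₂₃ : Type u}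
    [Group G₁] [Group G₂] [Group H₁₂] [Group H₁₃] [Group H₂₃] [Group H₁₂₃]
    (f₁ : H₁₂ →* G₁) (f₂ : H₁₂ →* G₂) (g₁ : H₁₃ →* G₁) (g₂ : H₂₃ →* G₂)
    (j₁₂ : H₁₂₃ →* H₁₂) (j₁₃ : H₁₂₃ →* H₁₃) (j₂₃ : H₁₂₃ →* H₂₃)
    (hf₁ : Function.Injective f₁) (hf₂ : Function.Injective f₂)
    (hg₁ : Function.Injective g₁) (hg₂ : Function.Injective g₂)
    (hj₁₂ : Function.Injective j₁₂) (hj₁₃ : Function.Injective j₁₃)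
    (hj₂₃ : Function.Injective j₂₃)
    (hcomm₁ : g₁.comp j₁₃ = f₁.comp j₁₂) (hcomm₂ : g₂.comp j₂₃ = f₂.comp j₁₂)
    (hfill₁ : f₁.range ⊓ g₁.range = (g₁.comp j₁₃).range)
    (hfill₂ : f₂.range ⊓ g₂.range = (g₂.comp j₂₃).range) :
    Function.Injective (Amalgam.inl f₁ f₂) ∧
    Function.Injective (Amalgam.inr f₁ f₂) ∧
    ∃ Φ : Amalgam j₁₃ j₂₃ →* Amalgam f₁ f₂,
      Φ.comp (Amalgam.inl j₁₃ j₂₃) = (Amalgam.inl f₁ f₂).comp g₁ ∧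
      Φ.comp (Amalgam.inr j₁₃ j₂₃) = (Amalgam.inr f₁ f₂).comp g₂ ∧
      Function.Injective Φ := by
  have hf := gPairHom_injective hf₁ hf₂
  have hcomm : ∀ b, (gPairMap g₁ g₂ b).comp (gPairHom j₁₃ j₂₃ b) = (gPairHom f₁ f₂ b).comp j₁₂
    | true => hcomm₁
    | false => hcomm₂
  have hfill :
      ∀ b, (gPairHom f₁ f₂ b).range.comap (gPairMap g₁ g₂ b) ≤ (gPairHom j₁₃ j₂₃ b).range
    | true => MonoidHom.comap_range_le_of_inf_range_eq hg₁ hfill₁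
    | false => MonoidHom.comap_range_le_of_inf_range_eq hg₂ hfill₂
  refine ⟨Monoid.PushoutI.of_injective hf true, Monoid.PushoutI.of_injective hf false,
    Monoid.PushoutI.map _ _ hcomm, Monoid.PushoutI.map_comp_of true,
    Monoid.PushoutI.map_comp_of false, ?_⟩
  exact Monoid.PushoutI.map_injective (gPairHom_injective hj₁₃ hj₂₃) hf
    (gPairMap_injective hg₁ hg₂) hj₁₂ hfill
end
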